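/- Let b > 0 and r₂ be real numbers and define the homogeneous quartic polynomial Q(W₀, W₁, W₂) = W₂⁴ − 16·b·W₀³·W₁ + 48·r₂·W₀²·W₁² + 16·b·W₀·W₁³ in three complex variables. Then the only common zero in ℂ³ of the three partial derivatives ∂Q/∂W₀, ∂Q/∂W₁, ∂Q/∂W₂ is (0, 0, 0); consequently the projective plane curve {Q = 0} ⊂ ℂP² is smooth (nonsingular). -/
import Mathlib


open MvPolynomial

/-- The homogeneous quartic
`Q(W₀,W₁,W₂) = W₂⁴ − 16b W₀³W₁ + 48r₂ W₀²W₁² + 16b W₀W₁³`. -/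
noncomputable def Qpoly (b r₂ : ℝ) : MvPolynomial (Fin 3) ℂ :=
  (X 2) ^ 4 - C ((16 * b : ℝ) : ℂ) * (X 0) ^ 3 * X 1
    + C ((48 * r₂ : ℝ) : ℂ) * (X 0) ^ 2 * (X 1) ^ 2
    + C ((16 * b : ℝ) : ℂ) * X 0 * (X 1) ^ 3

/-- For `b > 0` real, the only common zero in `ℂ³` of the three partial
derivatives of `Q` is the origin; hence the projective plane quartic
`{Q = 0} ⊂ ℂP²` is smooth. -/
theorem quartic_smooth (b r₂ : ℝ) (hb : 0 < b) :
    ∀ W : Fin 3 → ℂ,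
      (∀ i : Fin 3, eval W (pderiv i (Qpoly b r₂)) = 0) → W = 0 := by
  intro W h
  have h0 := h 0
  have h1 := h 1
  have h2 := h 2
  simp only [Qpoly, map_add, map_sub, map_mul, pderiv_pow, pderiv_X, pderiv_mul, pderiv_C,
    eval_add, eval_sub, eval_mul, eval_pow, eval_C, eval_X] at h0 h1 h2
  simp at h0 h1 h2
  set x := W 0 with hx0
  set y := W 1 with hy0
  set bC : ℂ := ((b : ℝ) : ℂ) with hbC
  set r : ℂ := ((r₂ : ℝ) : ℂ) with hrC
  have hbne : bC ≠ 0 := by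
    simp [hbC, Complex.ofReal_ne_zero, hb.ne']
  -- goal: show x = 0 and y = 0
  have key : x = 0 ∧ y = 0 := by
    by_cases hx : x = 0
    · refine ⟨hx, ?_⟩
      have : 16 * bC * y ^ 3 = 0 := by linear_combination h0 + (48*bC*x*y - 96*r*y^2)*hx
      have hy3 : y ^ 3 = 0 :=
        (mul_eq_zero.mp this).resolve_left (by simp [hbne])
      exact pow_eq_zero_iff (by norm_num) |>.mp hy3
    · exfalso
      by_cases hy : y = 0
      · have : 16 * bC * x ^ 3 = 0 := by linear_combination -h1 + (96*r*x^2 + 48*bC*x*y)*hy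
        have hx3 : x ^ 3 = 0 := (mul_eq_zero.mp this).resolve_left (by simp [hbne])
        exact hx (pow_eq_zero_iff (by norm_num) |>.mp hx3)
      · -- both nonzero
        have hA : -3*bC*x^2 + 6*r*x*y + bC*y^2 = 0 := by
          have h16y : (16 : ℂ) * y ≠ 0 := by
            simp [hy]
          have : (16*y) * (-3*bC*x^2 + 6*r*x*y + bC*y^2) = 0 := by linear_combination h0
          exact (mul_eq_zero.mp this).resolve_left h16y
        have hB : -bC*x^2 + 6*r*x*y + 3*bC*y^2 = 0 := by
          have h16x : (16 : ℂ) * x ≠ 0 := by simp [hx]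
          have : (16*x) * (-bC*x^2 + 6*r*x*y + 3*bC*y^2) = 0 := by linear_combination h1
          exact (mul_eq_zero.mp this).resolve_left h16x
        have hx2 : x^2 + y^2 = 0 := by
          have : (-2*bC) * (x^2 + y^2) = 0 := by linear_combination hA - hB
          exact (mul_eq_zero.mp this).resolve_left (by simpa using hbne)
        have hC : 4*bC*y + 6*r*x = 0 := by
          have : y * (4*bC*y + 6*r*x) = 0 := by linear_combination hB + bC * hx2
          exact (mul_eq_zero.mp this).resolve_left hy
        have hD : (16*bC^2 + 36*r^2) * x^2 = 0 := by
          linear_combination 16*bC^2*hx2 + (6*r*x - 4*bC*y)*hC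
        have hco : (16*bC^2 + 36*r^2) ≠ 0 := by
          have : ((16*b^2 + 36*r₂^2 : ℝ) : ℂ) ≠ 0 := by
            rw [Complex.ofReal_ne_zero]
            positivity
          convert this using 1
          push_cast
          ring
        have : x^2 = 0 := (mul_eq_zero.mp hD).resolve_left hco
        exact hx (pow_eq_zero_iff (by norm_num) |>.mp this)
  funext i
  fin_cases i
  · exact key.1
  · exact key.2
  · exact h2
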